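/- arXiv:2107.11104 — 9 statements merged into one kernel-verified Lean document; each statement's English description precedes it below -/
import Mathlib

section
/- Let X be a finite set with two binary operations · and : such that for each x the map σ_x(y)=x·y and δ_x(y)=x:y are bijections, satisfying the q-cycle set axioms (q1) (x·y)·(x·z)=(y:x)·(y·z), (q2) (x:y):(x:z)=(y·x):(y:z), (q3) (x·y):(x·z)=(y:x)·(y:z). Then the map Δ : X×X → X×X defined by Δ(x,y) = (x·y, y:x) is bijective. -/
/-- In a finite regular q-cycle set, the map Δ(x,y) = (x·y, y:x) is bijective. -/
theorem qcs_Delta_bijective {X : Type*} [Fintype X] (σ δ : X → Equiv.Perm X)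
    (q1 : ∀ x y z : X, σ (σ x y) (σ x z) = σ (δ y x) (σ y z))
    (q2 : ∀ x y z : X, δ (δ x y) (δ x z) = δ (σ y x) (δ y z))
    (q3 : ∀ x y z : X, δ (σ x y) (σ x z) = σ (δ y x) (δ y z)) :
    Function.Bijective (fun p : X × X => (σ p.1 p.2, δ p.2 p.1)) := by
  classical
  -- The squaring map T(x) = σ x x
  set T : X → X := fun x => σ x x with hT
  -- Key identity from (q1) with z = y:  T(σ x y) = σ (δ y x) (T y)
  have key : ∀ x y : X, T (σ x y) = σ (δ y x) (T y) := fun x y => q1 x y y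
  -- The range of T is invariant under every σ w
  have hmaps : ∀ w : X, Set.MapsTo (σ w) (Set.range T) (Set.range T) := by
    rintro w _ ⟨y, rfl⟩
    refine ⟨σ ((δ y).symm w) y, ?_⟩
    rw [key]
    simp
  -- Hence T is surjective: every x equals (σ x)⁻¹ applied to T x ∈ range T,
  -- and range T is also invariant under (σ x)⁻¹ by finiteness.
  have hsurjT : Function.Surjective T := by
    intro x
    have hbij : Set.BijOn (σ x) (Set.range T) (Set.range T) :=
      ((Set.toFinite _).injOn_iff_bijOn_of_mapsTo (hmaps x)).mp
        (Set.injOn_of_injective (σ x).injective)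
    obtain ⟨m, hm, hmx⟩ := hbij.surjOn ⟨x, rfl⟩
    have : m = x := (σ x).injective hmx
    rwa [this] at hm
  have hinjT : Function.Injective T := Finite.injective_iff_surjective.mpr hsurjT
  -- Now Δ is injective, hence bijective
  rw [Fintype.bijective_iff_injective_and_card]
  refine ⟨?_, rfl⟩
  rintro ⟨x, y⟩ ⟨x', y'⟩ h
  have h1 : σ x y = σ x' y' := congrArg Prod.fst h
  have h2 : δ y x = δ y' x' := congrArg Prod.snd h
  have hTy : T y = T y' := by
    have e1 := key x y
    have e2 := key x' y'
    rw [h1, h2, e2] at e1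
    exact ((σ (δ y' x')).injective e1).symm
  have hy : y = y' := hinjT hTy
  subst hy
  have hx : x = x' := (δ y).injective h2
  simp [hx]
end

section
/- Let X be a finite regular q-cycle set. Then the positive displacement group Dis⁺(X) = ⟨σ_x σ_y⁻¹, δ_x δ_y⁻¹ | x,y ∈ X⟩ equals the negative displacement group Dis⁻(X) = ⟨σ_x⁻¹ σ_y, δ_x⁻¹ δ_y | x,y ∈ X⟩ as subgroups of Sym(X). -/
private lemma key_conj {X : Type*} [Fintype X] (f : X → Equiv.Perm X)
    (h : ∀ x y, ∃ a b, f x * (f y)⁻¹ = (f a)⁻¹ * f b) :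
    Subgroup.closure {g : Equiv.Perm X | ∃ x y, g = f x * (f y)⁻¹}
      = Subgroup.closure {g : Equiv.Perm X | ∃ x y, g = (f x)⁻¹ * f y} := by
  cases isEmpty_or_nonempty X with
  | inl hX =>
    congr 1
    ext g
    constructor <;> rintro ⟨x, -⟩ <;> exact hX.elim x
  | inr hX =>
    obtain ⟨x0⟩ := hX
    set c : Equiv.Perm X := f x0 with hc
    set A : Subgroup (Equiv.Perm X) :=
      Subgroup.closure {g : Equiv.Perm X | ∃ x y, g = f x * (f y)⁻¹} with hA
    set A' : Subgroup (Equiv.Perm X) :=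
      Subgroup.closure {g : Equiv.Perm X | ∃ x y, g = (f x)⁻¹ * f y} with hA'
    have hmap : A.map (MulAut.conj c⁻¹).toMonoidHom = A' := by
      apply le_antisymm
      · rw [hA, MonoidHom.map_closure]
        apply Subgroup.closure_le _ |>.mpr
        rintro g ⟨g', ⟨x, y, rfl⟩, rfl⟩
        have h1 : (f x)⁻¹ * f x0 ∈ A' := Subgroup.subset_closure ⟨x, x0, rfl⟩
        have h2 : (f y)⁻¹ * f x0 ∈ A' := Subgroup.subset_closure ⟨y, x0, rfl⟩
        have : (MulAut.conj c⁻¹).toMonoidHom (f x * (f y)⁻¹)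
            = ((f x)⁻¹ * f x0)⁻¹ * ((f y)⁻¹ * f x0) := by
          simp [MulAut.conj_apply, hc, mul_assoc]
        rw [this]
        exact mul_mem (inv_mem h1) h2
      · rw [hA']
        apply Subgroup.closure_le _ |>.mpr
        rintro g ⟨x, y, rfl⟩
        refine ⟨(f x * (f x0)⁻¹)⁻¹ * (f y * (f x0)⁻¹), ?_, ?_⟩
        · exact mul_mem (inv_mem (Subgroup.subset_closure ⟨x, x0, rfl⟩))
            (Subgroup.subset_closure ⟨y, x0, rfl⟩)
        · simp [MulAut.conj_apply, hc, mul_assoc]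
    have hle : A ≤ A' := by
      rw [hA]
      apply Subgroup.closure_le _ |>.mpr
      rintro g ⟨x, y, rfl⟩
      obtain ⟨a, b, hab⟩ := h x y
      rw [hab]
      exact Subgroup.subset_closure ⟨a, b, rfl⟩
    have hcard : Nat.card A' = Nat.card A := by
      rw [← hmap]
      exact (Nat.card_congr (A.equivMapOfInjective _ (MulEquiv.injective _)).toEquiv).symm
    exact Subgroup.eq_of_le_of_card_ge hle hcard.le

/-- For a finite regular q-cycle set, Dis⁺(X) = Dis⁻(X). -/
theorem qcs_dis_pos_eq_dis_neg {X : Type*} [Fintype X] (σ δ : X → Equiv.Perm X)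
    (q1 : ∀ x y z : X, σ (σ x y) (σ x z) = σ (δ y x) (σ y z))
    (q2 : ∀ x y z : X, δ (δ x y) (δ x z) = δ (σ y x) (δ y z))
    (q3 : ∀ x y z : X, δ (σ x y) (σ x z) = σ (δ y x) (δ y z)) :
    Subgroup.closure {g : Equiv.Perm X | ∃ x y, g = σ x * (σ y)⁻¹ ∨ g = δ x * (δ y)⁻¹}
      = Subgroup.closure {g : Equiv.Perm X | ∃ x y, g = (σ x)⁻¹ * σ y ∨ g = (δ x)⁻¹ * δ y} := by
  have hq1 : ∀ x y : X, σ (σ x y) * σ x = σ (δ y x) * σ y := by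
    intro x y; ext z; exact q1 x y z
  have hq2 : ∀ x y : X, δ (δ x y) * δ x = δ (σ y x) * δ y := by
    intro x y; ext z; exact q2 x y z
  have hσ : ∀ x y : X, ∃ a b, σ x * (σ y)⁻¹ = (σ a)⁻¹ * σ b := by
    intro x y
    refine ⟨σ x y, δ y x, ?_⟩
    have := hq1 x y
    rw [eq_comm, inv_mul_eq_iff_eq_mul, ← mul_assoc, this, mul_assoc, mul_inv_cancel, mul_one]
  have hδ : ∀ x y : X, ∃ a b, δ x * (δ y)⁻¹ = (δ a)⁻¹ * δ b := by
    intro x y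
    refine ⟨δ x y, σ y x, ?_⟩
    have := hq2 x y
    rw [eq_comm, inv_mul_eq_iff_eq_mul, ← mul_assoc, this, mul_assoc, mul_inv_cancel, mul_one]
  have hsplit1 : {g : Equiv.Perm X | ∃ x y, g = σ x * (σ y)⁻¹ ∨ g = δ x * (δ y)⁻¹}
      = {g : Equiv.Perm X | ∃ x y, g = σ x * (σ y)⁻¹}
        ∪ {g : Equiv.Perm X | ∃ x y, g = δ x * (δ y)⁻¹} := by
    ext g
    constructor
    · rintro ⟨x, y, h | h⟩
      · exact Or.inl ⟨x, y, h⟩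
      · exact Or.inr ⟨x, y, h⟩
    · rintro (⟨x, y, h⟩ | ⟨x, y, h⟩)
      · exact ⟨x, y, Or.inl h⟩
      · exact ⟨x, y, Or.inr h⟩
  have hsplit2 : {g : Equiv.Perm X | ∃ x y, g = (σ x)⁻¹ * σ y ∨ g = (δ x)⁻¹ * δ y}
      = {g : Equiv.Perm X | ∃ x y, g = (σ x)⁻¹ * σ y}
        ∪ {g : Equiv.Perm X | ∃ x y, g = (δ x)⁻¹ * δ y} := by
    ext g
    constructor
    · rintro ⟨x, y, h | h⟩
      · exact Or.inl ⟨x, y, h⟩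
      · exact Or.inr ⟨x, y, h⟩
    · rintro (⟨x, y, h⟩ | ⟨x, y, h⟩)
      · exact ⟨x, y, Or.inl h⟩
      · exact ⟨x, y, Or.inr h⟩
  rw [hsplit1, hsplit2, Subgroup.closure_union, Subgroup.closure_union,
    key_conj σ hσ, key_conj δ hδ]
end

section
/- Let X be a regular q-cycle set (not necessarily finite). Then for all x,y ∈ X one has σ_x σ_y⁻¹ = σ_{x·y}⁻¹ σ_{y:x} and δ_x δ_y⁻¹ = δ_{x:y}⁻¹ δ_{y·x}. In particular Dis⁺(X) is a subgroup of Dis⁻(X). -/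
/-- In a regular q-cycle set (not necessarily finite),
σ_x σ_y⁻¹ = σ_{x·y}⁻¹ σ_{y:x} and δ_x δ_y⁻¹ = δ_{x:y}⁻¹ δ_{y·x};
in particular Dis⁺(X) ≤ Dis⁻(X). -/
theorem qcs_dis_pos_le_dis_neg {X : Type*} (σ δ : X → Equiv.Perm X)
    (q1 : ∀ x y z : X, σ (σ x y) (σ x z) = σ (δ y x) (σ y z))
    (q2 : ∀ x y z : X, δ (δ x y) (δ x z) = δ (σ y x) (δ y z))
    (q3 : ∀ x y z : X, δ (σ x y) (σ x z) = σ (δ y x) (δ y z)) :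
    (∀ x y : X, σ x * (σ y)⁻¹ = (σ (σ x y))⁻¹ * σ (δ y x)) ∧
    (∀ x y : X, δ x * (δ y)⁻¹ = (δ (δ x y))⁻¹ * δ (σ y x)) ∧
    Subgroup.closure {g : Equiv.Perm X | ∃ x y, g = σ x * (σ y)⁻¹ ∨ g = δ x * (δ y)⁻¹}
      ≤ Subgroup.closure {g : Equiv.Perm X | ∃ x y, g = (σ x)⁻¹ * σ y ∨ g = (δ x)⁻¹ * δ y} := by
  have hs : ∀ x y : X, σ x * (σ y)⁻¹ = (σ (σ x y))⁻¹ * σ (δ y x) := by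
    intro x y
    have h : σ (σ x y) * σ x = σ (δ y x) * σ y := by
      ext z; simp [Equiv.Perm.mul_apply, q1 x y z]
    calc σ x * (σ y)⁻¹ = (σ (σ x y))⁻¹ * (σ (σ x y) * σ x) * (σ y)⁻¹ := by group
      _ = (σ (σ x y))⁻¹ * (σ (δ y x) * σ y) * (σ y)⁻¹ := by rw [h]
      _ = (σ (σ x y))⁻¹ * σ (δ y x) := by group
  have hd : ∀ x y : X, δ x * (δ y)⁻¹ = (δ (δ x y))⁻¹ * δ (σ y x) := by
    intro x y
    have h : δ (δ x y) * δ x = δ (σ y x) * δ y := by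
      ext z; simp [Equiv.Perm.mul_apply, q2 x y z]
    calc δ x * (δ y)⁻¹ = (δ (δ x y))⁻¹ * (δ (δ x y) * δ x) * (δ y)⁻¹ := by group
      _ = (δ (δ x y))⁻¹ * (δ (σ y x) * δ y) * (δ y)⁻¹ := by rw [h]
      _ = (δ (δ x y))⁻¹ * δ (σ y x) := by group
  refine ⟨hs, hd, ?_⟩
  apply Subgroup.closure_le _ |>.mpr
  rintro g ⟨x, y, h | h⟩
  · exact Subgroup.subset_closure ⟨σ x y, δ y x, Or.inl (h.trans (hs x y))⟩
  · exact Subgroup.subset_closure ⟨δ x y, σ y x, Or.inr (h.trans (hd x y))⟩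
end

section
/- Let X be a finite indecomposable q-cycle set such that the permutation group G(X) = ⟨σ_x, δ_x | x ∈ X⟩ acts regularly on X. Then the squaring maps q and q' coincide if and only if the operations · and : coincide. -/
/-- For a finite indecomposable q-cycle set whose permutation group acts regularly,
the squaring maps q, q' coincide iff the operations · and : coincide. -/
theorem qcs_sq_eq_iff_ops_eq {X : Type*} [Fintype X] (σ δ : X → Equiv.Perm X)
    (q1 : ∀ x y z : X, σ (σ x y) (σ x z) = σ (δ y x) (σ y z))
    (q2 : ∀ x y z : X, δ (δ x y) (δ x z) = δ (σ y x) (δ y z))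
    (q3 : ∀ x y z : X, δ (σ x y) (σ x z) = σ (δ y x) (δ y z))
    (htrans : ∀ x y : X,
      ∃ g ∈ Subgroup.closure {g : Equiv.Perm X | ∃ x, g = σ x ∨ g = δ x}, g x = y)
    (hreg : ∀ g ∈ Subgroup.closure {g : Equiv.Perm X | ∃ x, g = σ x ∨ g = δ x},
      ∀ x : X, g x = x → g = 1) :
    (∀ x : X, σ x x = δ x x) ↔ (∀ x : X, σ x = δ x) := by
  constructor
  · intro h x
    have hs : σ x ∈ Subgroup.closure {g : Equiv.Perm X | ∃ x, g = σ x ∨ g = δ x} :=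
      Subgroup.subset_closure ⟨x, Or.inl rfl⟩
    have hd : δ x ∈ Subgroup.closure {g : Equiv.Perm X | ∃ x, g = σ x ∨ g = δ x} :=
      Subgroup.subset_closure ⟨x, Or.inr rfl⟩
    have hg := Subgroup.mul_mem _ hd (Subgroup.inv_mem _ hs)
    have hfix : (δ x * (σ x)⁻¹) (σ x x) = σ x x := by
      simp [Equiv.Perm.mul_apply, (h x).symm]
    have h1 := hreg _ hg _ hfix
    rw [mul_inv_eq_one] at h1
    exact h1.symm
  · intro h x
    rw [h x]
end

section
/- Let X be a finite indecomposable q-cycle set with |X| > 1 such that G(X) acts regularly on X. Then X is retractable, i.e., there exist distinct x, y ∈ X with σ_x = σ_y and δ_x = δ_y. -/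
/-!
Suppose `x ↦ (σ x, δ x)` is injective. Taking `y = x` in (q1) and (q2) shows that `σ x x` and
`δ x x` have the same `σ` and the same `δ`, so `σ x x = δ x x`, and freeness forces `σ x = δ x`.
Then `σ` embeds `X` into `G(X)`, which a free action makes at most as large as `X`; hence some
`σ b` is the identity. Now (q1) with `x = b` gives `σ (δ y b) = 1 = σ b`, so every `δ y` fixes `b`
and is trivial. Thus `σ = δ = 1` everywhere, contradicting injectivity as soon as `|X| > 1`.
-/

open Equiv Function

namespace Equiv.Perm

variable {X : Type*} {G : Subgroup (Perm X)}

theorem eq_of_apply_eq_of_free (hfree : ∀ g ∈ G, ∀ x : X, g x = x → g = 1)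
    {g h : Perm X} (hg : g ∈ G) (hh : h ∈ G) {x : X} (hx : g x = h x) : g = h := by
  have hfix : (h⁻¹ * g) x = x := by rw [Perm.mul_apply, hx, Perm.inv_def, symm_apply_apply]
  exact (inv_mul_eq_one.mp (hfree _ (mul_mem (inv_mem hh) hg) x hfix)).symm

theorem exists_eq_of_injective_of_free [Finite X] [Nonempty X]
    (hfree : ∀ g ∈ G, ∀ x : X, g x = x → g = 1) {f : X → Perm X} (hf : Injective f)
    (hfG : ∀ x, f x ∈ G) {g : Perm X} (hg : g ∈ G) : ∃ x, f x = g := by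
  obtain ⟨x₀⟩ := ‹Nonempty X›
  let orbitMap : G → X := fun k => (k : Perm X) x₀
  have horbit : Injective orbitMap := fun k k' hk =>
    Subtype.ext (eq_of_apply_eq_of_free hfree k.2 k'.2 hk)
  let f' : X → G := fun x => ⟨f x, hfG x⟩
  have hf' : Injective f' := fun x y hxy => hf (congrArg Subtype.val hxy)
  obtain ⟨x, hx⟩ := Finite.injective_iff_surjective.mp (horbit.comp hf') (g x₀)
  exact ⟨x, eq_of_apply_eq_of_free hfree (hfG x) hg hx⟩

end Equiv.Perm

namespace QCycleSet

variable {X : Type*} (σ δ : X → Perm X)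

theorem sigma_sigma_self_eq (q1 : ∀ x y z : X, σ (σ x y) (σ x z) = σ (δ y x) (σ y z))
    (x : X) : σ (σ x x) = σ (δ x x) := by
  ext w
  simpa using q1 x x ((σ x).symm w)

theorem delta_delta_self_eq (q2 : ∀ x y z : X, δ (δ x y) (δ x z) = δ (σ y x) (δ y z))
    (x : X) : δ (δ x x) = δ (σ x x) := by
  ext w
  simpa using q2 x x ((δ x).symm w)

theorem sigma_delta_eq_one_of_sigma_eq_one
    (q1 : ∀ x y z : X, σ (σ x y) (σ x z) = σ (δ y x) (σ y z)) {b : X} (hb : σ b = 1) (y : X) :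
    σ (δ y b) = 1 := by
  ext w
  simpa [hb] using (q1 b y ((σ y).symm w)).symm

end QCycleSet

open QCycleSet Perm in
theorem qcs_regular_retractable_general {X : Type*} [Fintype X] (hX : 1 < Fintype.card X)
    (σ δ : X → Equiv.Perm X)
    (q1 : ∀ x y z : X, σ (σ x y) (σ x z) = σ (δ y x) (σ y z))
    (q2 : ∀ x y z : X, δ (δ x y) (δ x z) = δ (σ y x) (δ y z))
    (hreg : ∀ g ∈ Subgroup.closure {g : Equiv.Perm X | ∃ x, g = σ x ∨ g = δ x},
      ∀ x : X, g x = x → g = 1) :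
    ∃ x y : X, x ≠ y ∧ σ x = σ y ∧ δ x = δ y := by
  set G := Subgroup.closure {g : Perm X | ∃ x, g = σ x ∨ g = δ x}
  have memσ : ∀ x, σ x ∈ G := fun x => Subgroup.subset_closure ⟨x, Or.inl rfl⟩
  have memδ : ∀ x, δ x ∈ G := fun x => Subgroup.subset_closure ⟨x, Or.inr rfl⟩
  obtain ⟨x, y, hxy⟩ := Fintype.exists_pair_of_one_lt_card hX
  have : Nonempty X := ⟨x⟩
  by_contra hcon
  have hinj : Injective fun x => (σ x, δ x) := fun x y hxy => by
    by_contra hne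
    exact hcon ⟨x, y, hne, congrArg Prod.fst hxy, congrArg Prod.snd hxy⟩
  have hσδ : ∀ x, σ x = δ x := fun x =>
    eq_of_apply_eq_of_free hreg (memσ x) (memδ x) <|
      hinj (Prod.ext (sigma_sigma_self_eq σ δ q1 x) (delta_delta_self_eq σ δ q2 x).symm)
  have hσinj : Injective σ := fun x y h =>
    hinj (Prod.ext h (show δ x = δ y by rw [← hσδ, ← hσδ, h]))
  obtain ⟨b, hb⟩ := exists_eq_of_injective_of_free hreg hσinj memσ (one_mem G)
  have hδ : ∀ y, δ y = 1 := fun y =>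
    hreg _ (memδ y) b (hσinj ((sigma_delta_eq_one_of_sigma_eq_one σ δ q1 hb y).trans hb.symm))
  exact hxy (hinj (by simp only [hσδ, hδ]))

/-- A finite indecomposable q-cycle set with |X| > 1 and regular permutation
group is retractable. -/
theorem qcs_regular_retractable {X : Type*} [Fintype X] (hX : 1 < Fintype.card X)
    (σ δ : X → Equiv.Perm X)
    (q1 : ∀ x y z : X, σ (σ x y) (σ x z) = σ (δ y x) (σ y z))
    (q2 : ∀ x y z : X, δ (δ x y) (δ x z) = δ (σ y x) (δ y z))
    (q3 : ∀ x y z : X, δ (σ x y) (σ x z) = σ (δ y x) (δ y z))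
    (htrans : ∀ x y : X,
      ∃ g ∈ Subgroup.closure {g : Equiv.Perm X | ∃ x, g = σ x ∨ g = δ x}, g x = y)
    (hreg : ∀ g ∈ Subgroup.closure {g : Equiv.Perm X | ∃ x, g = σ x ∨ g = δ x},
      ∀ x : X, g x = x → g = 1) :
    ∃ x y : X, x ≠ y ∧ σ x = σ y ∧ δ x = δ y :=
  qcs_regular_retractable_general hX σ δ q1 q2 hreg
end

section
/- Let X be a finite indecomposable q-cycle set and p : X → Y a surjective q-cycle set homomorphism. Then for all i, x ∈ X: σ_i(p⁻¹(p(x))) = p⁻¹(p(σ_i(x))) and δ_i(p⁻¹(p(x))) = p⁻¹(p(δ_i(x))). -/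
open Function

/-- In the finite group `Equiv.Perm X` the inverse `e⁻¹` is a power of `e`, so it inherits the
semiconjugacy from `e`. -/
theorem Function.Semiconj.exists_semiconj_perm_inv {X Y : Type*} [Finite X] {p : X → Y}
    {e : Equiv.Perm X} {π : Y → Y} (h : Semiconj p e π) : ∃ π' : Y → Y, Semiconj p ⇑e⁻¹ π' := by
  obtain ⟨n, hn⟩ := mem_powers_iff_mem_zpowers.mpr (inv_mem (Subgroup.mem_zpowers e))
  refine ⟨π^[n], ?_⟩
  rw [← hn, Equiv.Perm.coe_pow]
  exact h.iterate_right n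

theorem Function.Semiconj.perm_image_fiber {X Y : Type*} [Finite X] {p : X → Y}
    {e : Equiv.Perm X} {π : Y → Y} (h : Semiconj p e π) (x : X) :
    ⇑e '' {z : X | p z = p x} = {z : X | p z = p (e x)} := by
  ext z
  constructor
  · rintro ⟨w, hw, rfl⟩
    change p (e w) = p (e x)
    rw [h w, h x, hw]
  · intro hz
    obtain ⟨π', h'⟩ := h.exists_semiconj_perm_inv
    refine ⟨e⁻¹ z, ?_, by simp⟩
    calc p (e⁻¹ z) = π' (p (e x)) := by rw [h' z, hz]
      _ = p (e⁻¹ (e x)) := (h' (e x)).symm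
      _ = p x := by simp

theorem qcs_epi_fiber_images_general {X Y : Type*} [Fintype X]
    (σ δ : X → Equiv.Perm X) (σ' δ' : Y → Equiv.Perm Y)
    (p : X → Y)
    (hhom : ∀ x y : X, p (σ x y) = σ' (p x) (p y) ∧ p (δ x y) = δ' (p x) (p y)) :
    ∀ i x : X,
      (⇑(σ i) '' {z : X | p z = p x} = {z : X | p z = p (σ i x)}) ∧
      (⇑(δ i) '' {z : X | p z = p x} = {z : X | p z = p (δ i x)}) := fun i x =>
  ⟨Semiconj.perm_image_fiber (fun z => (hhom i z).1) x,
    Semiconj.perm_image_fiber (fun z => (hhom i z).2) x⟩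

/-- For an epimorphism p from a finite indecomposable q-cycle set X,
σ_i(p⁻¹(p(x))) = p⁻¹(p(σ_i(x))) and δ_i(p⁻¹(p(x))) = p⁻¹(p(δ_i(x))). -/
theorem qcs_epi_fiber_images {X Y : Type*} [Fintype X] [Fintype Y]
    (σ δ : X → Equiv.Perm X) (σ' δ' : Y → Equiv.Perm Y)
    (q1 : ∀ x y z : X, σ (σ x y) (σ x z) = σ (δ y x) (σ y z))
    (q2 : ∀ x y z : X, δ (δ x y) (δ x z) = δ (σ y x) (δ y z))
    (q3 : ∀ x y z : X, δ (σ x y) (σ x z) = σ (δ y x) (δ y z))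
    (q1' : ∀ x y z : Y, σ' (σ' x y) (σ' x z) = σ' (δ' y x) (σ' y z))
    (q2' : ∀ x y z : Y, δ' (δ' x y) (δ' x z) = δ' (σ' y x) (δ' y z))
    (q3' : ∀ x y z : Y, δ' (σ' x y) (σ' x z) = σ' (δ' y x) (δ' y z))
    (htrans : ∀ x y : X,
      ∃ g ∈ Subgroup.closure {g : Equiv.Perm X | ∃ x, g = σ x ∨ g = δ x}, g x = y)
    (p : X → Y) (hsurj : Function.Surjective p)
    (hhom : ∀ x y : X, p (σ x y) = σ' (p x) (p y) ∧ p (δ x y) = δ' (p x) (p y)) :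
    ∀ i x : X,
      (⇑(σ i) '' {z : X | p z = p x} = {z : X | p z = p (σ i x)}) ∧
      (⇑(δ i) '' {z : X | p z = p x} = {z : X | p z = p (δ i x)}) :=
  qcs_epi_fiber_images_general σ δ σ' δ' p hhom
end

section
/- Let X be a finite indecomposable q-cycle set with |X| > 1, and suppose G(X) has an imprimitivity block system B = {Δ_x}_{x∈X} such that Dis(X, Δ) = ⟨σ_x⁻¹σ_y, δ_x⁻¹δ_y | x,y ∈ Δ⟩ stabilizes every block of B setwise, for every block Δ. Then the relation x ≈ y ⟺ Δ_x = Δ_y is a congruence of q-cycle sets (i.e., also a right congruence: x ≈ x' implies x·y ≈ x'·y and x:y ≈ x':y). -/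
/-- If every block displacement group Dis(X,Δ) stabilizes every block of the
block system B setwise, then x ≈ y ⟺ Δ_x = Δ_y is a congruence of q-cycle sets. -/
theorem qcs_blocks_congruence {X : Type*} [Fintype X] (hX : 1 < Fintype.card X)
    (σ δ : X → Equiv.Perm X)
    (q1 : ∀ x y z : X, σ (σ x y) (σ x z) = σ (δ y x) (σ y z))
    (q2 : ∀ x y z : X, δ (δ x y) (δ x z) = δ (σ y x) (δ y z))
    (q3 : ∀ x y z : X, δ (σ x y) (σ x z) = σ (δ y x) (δ y z))
    (htrans : ∀ x y : X,
      ∃ g ∈ Subgroup.closure {g : Equiv.Perm X | ∃ x, g = σ x ∨ g = δ x}, g x = y)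
    (B : X → Set X)
    (hmem : ∀ x : X, x ∈ B x)
    (hpart : ∀ x y : X, y ∈ B x → B y = B x)
    (hσB : ∀ x y : X, ⇑(σ x) '' B y = B (σ x y))
    (hδB : ∀ x y : X, ⇑(δ x) '' B y = B (δ x y))
    (hDis : ∀ u : X, ∀ g ∈ Subgroup.closure
        {g : Equiv.Perm X | ∃ x ∈ B u, ∃ y ∈ B u, g = (σ x)⁻¹ * σ y ∨ g = (δ x)⁻¹ * δ y},
      ∀ z : X, ⇑g '' B z = B z) :
    ∀ x x' y y' : X, B x = B x' → B y = B y' →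
      B (σ x y) = B (σ x' y') ∧ B (δ x y) = B (δ x' y') := by
  intro x x' y y' hx hy
  have hx'mem : x' ∈ B x := by rw [hx]; exact hmem x'
  have main : ∀ (f : X → Equiv.Perm X), (∀ a b : X, ⇑(f a) '' B b = B (f a b)) →
      ((f x)⁻¹ * f x' ∈ Subgroup.closure
        {g : Equiv.Perm X | ∃ p ∈ B x, ∃ q ∈ B x, g = (σ p)⁻¹ * σ q ∨ g = (δ p)⁻¹ * δ q}) →
      B (f x y) = B (f x' y') := by
    intro f hfB hg
    have hgy : ((f x)⁻¹ * f x') y ∈ B y := by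
      have h := hDis x _ hg y
      rw [← h]
      exact ⟨y, hmem y, rfl⟩
    have h1 : f x' y ∈ B (f x y) := by
      rw [← hfB x y]
      exact ⟨((f x)⁻¹ * f x') y, hgy, by simp⟩
    have h3 : f x' y' ∈ B (f x' y) := by
      rw [← hfB x' y, hy]
      exact ⟨y', hmem y', rfl⟩
    rw [hpart _ _ h3, hpart _ _ h1]
  exact ⟨main σ hσB (Subgroup.subset_closure ⟨x, hmem x, x', hx'mem, Or.inl rfl⟩),
    main δ hδB (Subgroup.subset_closure ⟨x, hmem x, x', hx'mem, Or.inr rfl⟩)⟩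
end

section
/- Let (X, r) be a finite bijective non-degenerate set-theoretic solution of the Yang–Baxter equation, written r(x,y) = (λ_x(y), ρ_y(x)), and define η_x(y) = ρ_{λ_y⁻¹(x)}(y). Then for all x, y ∈ X, the elements x and y lie in the same orbit under G(X,r) = ⟨λ_z, η_z | z ∈ X⟩ if and only if they lie in the same orbit under F(X,r) = ⟨λ_z, ρ_z | z ∈ X⟩. In particular, (X,r) is indecomposable (F(X,r) transitive) if and only if G(X,r) acts transitively on X. -/
/-- The map r acting on the first two components of a triple. -/
def yb12 {X : Type*} (r : X × X → X × X) : X × X × X → X × X × X :=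
  fun p => ((r (p.1, p.2.1)).1, (r (p.1, p.2.1)).2, p.2.2)

/-- The map r acting on the last two components of a triple. -/
def yb23 {X : Type*} (r : X × X → X × X) : X × X × X → X × X × X :=
  fun p => (p.1, r p.2)

/-!
Since `η_x(y) = ρ_{λ_y⁻¹ x}(y)` and `ρ_x(y) = η_{λ_y x}(y)`, every generator of either group
moves each point `y` to where some generator of the other group moves it. The permutations
that map every point into its own orbit under a fixed group form a subgroup, so each of the
two groups maps every point into its orbit under the other, and the orbits coincide.
-/

namespace Equiv.Perm

variable {X : Type*}

def orbitPreserving (K : Subgroup (Perm X)) : Subgroup (Perm X) where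
  carrier := {g | ∀ y, ∃ t ∈ K, t y = g y}
  one_mem' y := ⟨1, K.one_mem, rfl⟩
  mul_mem' {g₁ g₂} hg₁ hg₂ y := by
    obtain ⟨t₂, ht₂, h₂⟩ := hg₂ y
    obtain ⟨t₁, ht₁, h₁⟩ := hg₁ (g₂ y)
    exact ⟨t₁ * t₂, K.mul_mem ht₁ ht₂, by rw [mul_apply, h₂, h₁, mul_apply]⟩
  inv_mem' {g} hg y := by
    obtain ⟨t, ht, h⟩ := hg (g⁻¹ y)
    exact ⟨t⁻¹, K.inv_mem ht, by rw [inv_eq_iff_eq, h, ← mul_apply, mul_inv_cancel, one_apply]⟩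

theorem exists_apply_eq_of_le_orbitPreserving {H K : Subgroup (Perm X)}
    (hHK : H ≤ orbitPreserving K) {x y : X} (h : ∃ g ∈ H, g x = y) : ∃ g ∈ K, g x = y := by
  obtain ⟨g, hg, rfl⟩ := h
  exact hHK hg x

end Equiv.Perm

theorem yb_orbits_G_eq_F_general {X : Type*}
    (lam rho eta : X → Equiv.Perm X)
    (heta : ∀ x y : X, eta x y = rho ((lam y)⁻¹ x) y) :
    (∀ x y : X,
      (∃ g ∈ Subgroup.closure {g : Equiv.Perm X | ∃ z, g = lam z ∨ g = eta z}, g x = y) ↔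
      (∃ g ∈ Subgroup.closure {g : Equiv.Perm X | ∃ z, g = lam z ∨ g = rho z}, g x = y)) ∧
    ((∀ x y : X,
        ∃ g ∈ Subgroup.closure {g : Equiv.Perm X | ∃ z, g = lam z ∨ g = rho z}, g x = y) ↔
      (∀ x y : X,
        ∃ g ∈ Subgroup.closure {g : Equiv.Perm X | ∃ z, g = lam z ∨ g = eta z}, g x = y)) := by
  have hGF : Subgroup.closure {g : Equiv.Perm X | ∃ z, g = lam z ∨ g = eta z} ≤
      Equiv.Perm.orbitPreserving (Subgroup.closure {g | ∃ z, g = lam z ∨ g = rho z}) := by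
    rw [Subgroup.closure_le]
    rintro _ ⟨z, rfl | rfl⟩ y
    · exact ⟨lam z, Subgroup.subset_closure ⟨z, .inl rfl⟩, rfl⟩
    · exact ⟨rho ((lam y)⁻¹ z), Subgroup.subset_closure ⟨_, .inr rfl⟩, (heta z y).symm⟩
  have hFG : Subgroup.closure {g : Equiv.Perm X | ∃ z, g = lam z ∨ g = rho z} ≤
      Equiv.Perm.orbitPreserving (Subgroup.closure {g | ∃ z, g = lam z ∨ g = eta z}) := by
    rw [Subgroup.closure_le]
    rintro _ ⟨z, rfl | rfl⟩ y
    · exact ⟨lam z, Subgroup.subset_closure ⟨z, .inl rfl⟩, rfl⟩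
    · exact ⟨eta (lam y z), Subgroup.subset_closure ⟨_, .inr rfl⟩, by simp [heta]⟩
  have orbits_eq : ∀ x y : X,
      (∃ g ∈ Subgroup.closure {g : Equiv.Perm X | ∃ z, g = lam z ∨ g = eta z}, g x = y) ↔
      (∃ g ∈ Subgroup.closure {g : Equiv.Perm X | ∃ z, g = lam z ∨ g = rho z}, g x = y) :=
    fun _ _ ↦ ⟨Equiv.Perm.exists_apply_eq_of_le_orbitPreserving hGF,
      Equiv.Perm.exists_apply_eq_of_le_orbitPreserving hFG⟩
  exact ⟨orbits_eq, fun h x y ↦ (orbits_eq x y).2 (h x y), fun h x y ↦ (orbits_eq x y).1 (h x y)⟩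

/-- For a finite bijective non-degenerate solution (X,r), the orbits of
G(X,r) = ⟨λ_z, η_z⟩ and F(X,r) = ⟨λ_z, ρ_z⟩ coincide; in particular F is transitive iff
G is transitive. -/
theorem yb_orbits_G_eq_F {X : Type*} [Fintype X]
    (lam rho eta : X → Equiv.Perm X) (r : X × X → X × X)
    (hr : ∀ x y : X, r (x, y) = (lam x y, rho y x))
    (hrbij : Function.Bijective r)
    (hYB : yb12 r ∘ yb23 r ∘ yb12 r = yb23 r ∘ yb12 r ∘ yb23 r)
    (heta : ∀ x y : X, eta x y = rho ((lam y)⁻¹ x) y) :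
    (∀ x y : X,
      (∃ g ∈ Subgroup.closure {g : Equiv.Perm X | ∃ z, g = lam z ∨ g = eta z}, g x = y) ↔
      (∃ g ∈ Subgroup.closure {g : Equiv.Perm X | ∃ z, g = lam z ∨ g = rho z}, g x = y)) ∧
    ((∀ x y : X,
        ∃ g ∈ Subgroup.closure {g : Equiv.Perm X | ∃ z, g = lam z ∨ g = rho z}, g x = y) ↔
      (∀ x y : X,
        ∃ g ∈ Subgroup.closure {g : Equiv.Perm X | ∃ z, g = lam z ∨ g = eta z}, g x = y)) :=
  yb_orbits_G_eq_F_general lam rho eta heta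
end

section
/- Let X be a finite indecomposable q-cycle set with |X| > 1 whose permutation group G(X) is abelian and acts regularly on X. Then X is multipermutational: there exists n with |Ret^n(X)| = 1. -/
/-!
Write `ε x = σ_x δ_x⁻¹`. Axioms (q1) and (q3) say `σ_{x·y} σ_x = σ_{y:x} σ_y` and
`δ_{x·y} σ_x = σ_{y:x} δ_y`, so in an abelian `G(X)` we get `ε (x·y) = ε y`, and (q2), (q3)
give `ε (x:y) = ε y` in the same way. By transitivity `ε` is a constant `c ∈ G(X)`:
`σ_x = c δ_x`.

The relations `qcsRel k` increase with `k`, so on a finite set they stabilise at a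
`G(X)`-invariant equivalence `R` for which `X/R` is irretractable. Modulo `R` the element
`c` acts trivially and `y ↦ δ_y p` is injective, hence bijective, so some `y₀` has
`δ_{y₀} ≡ id` and `σ_{y₀} ≡ id`. Then (q2) forces `x : y₀ ≡ y₀` for every `x`, and
injectivity gives `x ≡ y` for all `x, y`: the stable relation is total.
-/

/-- The iterated retract relation of a regular q-cycle set: x ~_0 y iff x = y, and
x ~_{k+1} y iff the classes of x and y have equal left multiplications on Ret^k(X). -/
def qcsRel {X : Type*} (σ δ : X → Equiv.Perm X) : ℕ → X → X → Prop
  | 0, x, y => x = y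
  | k + 1, x, y => ∀ z : X, qcsRel σ δ k (σ x z) (σ y z) ∧ qcsRel σ δ k (δ x z) (δ y z)

section

open Equiv

variable {X : Type*}

theorem mul_inv_eq_of_mul_eq {G : Type*} [Group G] {a b a' b' s t : G} (ha : a * s = t * a')
    (hb : b * s = t * b') (ht : Commute t (a' * b'⁻¹)) : a * b⁻¹ = a' * b'⁻¹ := by
  have : a * b⁻¹ = t * (a' * b'⁻¹) * t⁻¹ := by
    rw [eq_mul_inv_of_mul_eq ha, eq_mul_inv_of_mul_eq hb]
    group
  rw [this, ht.eq, mul_inv_cancel_right]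

/-- The permutation group `G(X)`. -/
def qcsGroup (σ δ : X → Perm X) : Subgroup (Perm X) :=
  Subgroup.closure {g | ∃ x, g = σ x ∨ g = δ x}

namespace qcsGroup

variable {σ δ : X → Perm X}

theorem sigma_mem (x : X) : σ x ∈ qcsGroup σ δ := Subgroup.subset_closure ⟨x, Or.inl rfl⟩

theorem delta_mem (x : X) : δ x ∈ qcsGroup σ δ := Subgroup.subset_closure ⟨x, Or.inr rfl⟩

theorem sigma_mul_delta_inv_mem (x : X) : σ x * (δ x)⁻¹ ∈ qcsGroup σ δ :=
  mul_mem (sigma_mem x) (inv_mem (delta_mem x))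

theorem induction_of_finite [Finite X] {p : Perm X → Prop} (sigma : ∀ x, p (σ x))
    (delta : ∀ x, p (δ x)) (one : p 1) (mul : ∀ g h, p g → p h → p (g * h)) {g : Perm X}
    (hg : g ∈ qcsGroup σ δ) : p g := by
  rw [qcsGroup, ← Subgroup.mem_toSubmonoid, Subgroup.closure_toSubmonoid_of_finite] at hg
  induction hg using Submonoid.closure_induction with
  | mem g hg => obtain ⟨x, rfl | rfl⟩ := hg; exacts [sigma x, delta x]
  | one => exact one
  | mul g h _ _ hg hh => exact mul g h hg hh

structure IsAbelianTransitive (σ δ : X → Perm X) : Prop where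
  exists_apply_eq : ∀ x y, ∃ g ∈ qcsGroup σ δ, g x = y
  commute : ∀ g ∈ qcsGroup σ δ, ∀ h ∈ qcsGroup σ δ, g * h = h * g

end qcsGroup

structure IsQCycleSet (σ δ : X → Perm X) : Prop where
  q1 : ∀ x y z, σ (σ x y) (σ x z) = σ (δ y x) (σ y z)
  q2 : ∀ x y z, δ (δ x y) (δ x z) = δ (σ y x) (δ y z)
  q3 : ∀ x y z, δ (σ x y) (σ x z) = σ (δ y x) (δ y z)

namespace IsQCycleSet

variable {σ δ : X → Perm X}

theorem sigma_sigma_mul (hq : IsQCycleSet σ δ) (x y : X) :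
    σ (σ x y) * σ x = σ (δ y x) * σ y :=
  Perm.ext (hq.q1 x y)

theorem delta_delta_mul (hq : IsQCycleSet σ δ) (x y : X) :
    δ (δ x y) * δ x = δ (σ y x) * δ y :=
  Perm.ext (hq.q2 x y)

theorem delta_sigma_mul (hq : IsQCycleSet σ δ) (x y : X) :
    δ (σ x y) * σ x = σ (δ y x) * δ y :=
  Perm.ext (hq.q3 x y)

theorem sigma_mul_delta_inv_apply_eq [Finite X] (hq : IsQCycleSet σ δ)
    (habel : ∀ g ∈ qcsGroup σ δ, ∀ h ∈ qcsGroup σ δ, g * h = h * g) {g : Perm X}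
    (hg : g ∈ qcsGroup σ δ) (x : X) : σ (g x) * (δ (g x))⁻¹ = σ x * (δ x)⁻¹ := by
  refine qcsGroup.induction_of_finite
    (p := fun g => ∀ x, σ (g x) * (δ (g x))⁻¹ = σ x * (δ x)⁻¹)
    (fun y x => ?_) (fun y x => ?_) (fun _ => rfl) (fun g h hg hh x => (hg (h x)).trans (hh x)) hg x
  · exact mul_inv_eq_of_mul_eq (hq.sigma_sigma_mul y x) (hq.delta_sigma_mul y x)
      (habel _ (qcsGroup.sigma_mem _) _ (qcsGroup.sigma_mul_delta_inv_mem x))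
  · exact mul_inv_eq_of_mul_eq (hq.delta_sigma_mul x y).symm (hq.delta_delta_mul y x)
      (habel _ (qcsGroup.delta_mem _) _ (qcsGroup.sigma_mul_delta_inv_mem x))

theorem exists_sigma_eq_mul_delta [Finite X] [Nonempty X] (hq : IsQCycleSet σ δ)
    (hG : qcsGroup.IsAbelianTransitive σ δ) :
    ∃ c ∈ qcsGroup σ δ, ∀ x, σ x = c * δ x := by
  obtain ⟨x₀⟩ := ‹Nonempty X›
  refine ⟨σ x₀ * (δ x₀)⁻¹, qcsGroup.sigma_mul_delta_inv_mem x₀, fun x => ?_⟩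
  obtain ⟨g, hg, rfl⟩ := hG.exists_apply_eq x₀ x
  rw [← hq.sigma_mul_delta_inv_apply_eq hG.commute hg x₀, inv_mul_cancel_right]

end IsQCycleSet

namespace qcsRel

variable {σ δ : X → Perm X}

theorem refl : ∀ k (x : X), qcsRel σ δ k x x
  | 0, _ => rfl
  | k + 1, _ => fun _ => ⟨refl k _, refl k _⟩

theorem symm : ∀ k {x y : X}, qcsRel σ δ k x y → qcsRel σ δ k y x
  | 0, _, _, h => Eq.symm h
  | k + 1, _, _, h => fun z => ⟨symm k (h z).1, symm k (h z).2⟩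

theorem trans : ∀ k {x y z : X}, qcsRel σ δ k x y → qcsRel σ δ k y z → qcsRel σ δ k x z
  | 0, _, _, _, h, h' => Eq.trans h h'
  | k + 1, _, _, _, h, h' => fun u => ⟨trans k (h u).1 (h' u).1, trans k (h u).2 (h' u).2⟩

theorem le_succ : ∀ k, qcsRel σ δ k ≤ qcsRel σ δ (k + 1)
  | 0, x, _, rfl => refl 1 x
  | k + 1, _, _, h => fun z => ⟨le_succ k _ _ (h z).1, le_succ k _ _ (h z).2⟩

theorem map_sigma_delta (hq : IsQCycleSet σ δ) :
    ∀ k (z : X) {x y : X}, qcsRel σ δ k x y →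
      qcsRel σ δ k (σ z x) (σ z y) ∧ qcsRel σ δ k (δ z x) (δ z y)
  | 0, _, _, _, rfl => ⟨rfl, rfl⟩
  | k + 1, z, x, y, h => by
    have ih := map_sigma_delta hq k
    refine ⟨fun u => ?_, fun u => ?_⟩
    · obtain ⟨u, rfl⟩ := (σ z).surjective u
      rw [hq.q1 z x u, hq.q1 z y u, hq.q3 z x u, hq.q3 z y u]
      exact ⟨trans k (ih _ (h u).1).1 (le_succ k _ _ (h z).2 _).1,
        trans k (ih _ (h u).2).1 (le_succ k _ _ (h z).2 _).1⟩
    · obtain ⟨u, rfl⟩ := (δ z).surjective u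
      rw [← hq.q3 x z u, ← hq.q3 y z u, hq.q2 z x u, hq.q2 z y u]
      exact ⟨trans k (ih _ (h u).1).2 (le_succ k _ _ (h z).1 _).2,
        trans k (ih _ (h u).2).2 (le_succ k _ _ (h z).1 _).2⟩

theorem map_of_mem [Finite X] (hq : IsQCycleSet σ δ) (k : ℕ) {g : Perm X}
    (hg : g ∈ qcsGroup σ δ) {a b : X} (h : qcsRel σ δ k a b) : qcsRel σ δ k (g a) (g b) :=
  qcsGroup.induction_of_finite
    (p := fun g => ∀ {a b}, qcsRel σ δ k a b → qcsRel σ δ k (g a) (g b))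
    (fun z _ _ h => (map_sigma_delta hq k z h).1) (fun z _ _ h => (map_sigma_delta hq k z h).2)
    id (fun _ _ hg hh _ _ h => hg (hh h)) hg h

theorem exists_succ_eq [Finite X] (σ δ : X → Perm X) :
    ∃ k, qcsRel σ δ (k + 1) = qcsRel σ δ k := by
  obtain ⟨k, hk⟩ := WellFoundedGT.monotone_chain_condition
    ⟨qcsRel σ δ, monotone_nat_of_le_succ le_succ⟩
  exact ⟨k, (hk (k + 1) k.le_succ).symm⟩

def setoid (σ δ : X → Perm X) (k : ℕ) : Setoid X :=
  ⟨qcsRel σ δ k, ⟨refl k, symm k, trans k⟩⟩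

end qcsRel

/-- With `map_rel`, the implication `→` of `rel_iff` makes `R` a congruence of the q-cycle set;
the implication `←` says that the quotient `X/R` is irretractable. -/
structure IsIrretractableCongruence (σ δ : X → Perm X) (R : Setoid X) : Prop where
  map_rel : ∀ g ∈ qcsGroup σ δ, ∀ {a b}, R a b → R (g a) (g b)
  rel_iff : ∀ {x y}, R x y ↔ ∀ z, R (σ x z) (σ y z) ∧ R (δ x z) (δ y z)

theorem qcsRel.isIrretractableCongruence [Finite X] {σ δ : X → Perm X} (hq : IsQCycleSet σ δ)
    {k : ℕ} (hk : qcsRel σ δ (k + 1) = qcsRel σ δ k) :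
    IsIrretractableCongruence σ δ (qcsRel.setoid σ δ k) where
  map_rel _ hg _ _ := qcsRel.map_of_mem hq k hg
  rel_iff {x y} := Iff.of_eq (congrFun (congrFun hk x) y).symm

namespace IsIrretractableCongruence

variable {σ δ : X → Perm X} {R : Setoid X}

theorem rel_apply_of_rel_apply (hR : IsIrretractableCongruence σ δ R)
    (hG : qcsGroup.IsAbelianTransitive σ δ)
    {f f' : Perm X} (hf : f ∈ qcsGroup σ δ) (hf' : f' ∈ qcsGroup σ δ) {w : X}
    (h : R (f w) (f' w)) (p : X) : R (f p) (f' p) := by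
  obtain ⟨g, hg, rfl⟩ := hG.exists_apply_eq w p
  have hfg : f (g w) = g (f w) := DFunLike.congr_fun (hG.commute f hf g hg) w
  have hf'g : f' (g w) = g (f' w) := DFunLike.congr_fun (hG.commute f' hf' g hg) w
  rw [hfg, hf'g]
  exact hR.map_rel g hg h

section

variable {c : Perm X}

theorem rel_of_forall_delta (hR : IsIrretractableCongruence σ δ R) (hc : c ∈ qcsGroup σ δ)
    (hσ : ∀ x, σ x = c * δ x) {u v : X} (h : ∀ z, R (δ u z) (δ v z)) : R u v :=
  hR.rel_iff.2 fun z => ⟨by rw [hσ u, hσ v]; exact hR.map_rel c hc (h z), h z⟩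

theorem rel_of_rel_delta_apply (hR : IsIrretractableCongruence σ δ R)
    (hG : qcsGroup.IsAbelianTransitive σ δ)
    (hc : c ∈ qcsGroup σ δ) (hσ : ∀ x, σ x = c * δ x) {y y' p : X}
    (h : R (δ y p) (δ y' p)) : R y y' :=
  hR.rel_of_forall_delta hc hσ
    (hR.rel_apply_of_rel_apply hG (qcsGroup.delta_mem y) (qcsGroup.delta_mem y') h)

theorem rel_apply_self (hq : IsQCycleSet σ δ) (hR : IsIrretractableCongruence σ δ R)
    (hG : qcsGroup.IsAbelianTransitive σ δ)
    (hc : c ∈ qcsGroup σ δ) (hσ : ∀ x, σ x = c * δ x) (p : X) : R (c p) p := by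
  have hδ : ∀ x, δ x = c⁻¹ * σ x := fun x => by rw [hσ, inv_mul_cancel_left]
  have hσσ : σ (σ p p) = σ (δ p p) := mul_right_cancel (hq.sigma_sigma_mul p p)
  have hδδ : δ (σ p p) = δ (δ p p) := by rw [hδ, hδ (δ p p), hσσ]
  have hw : R (σ p p) (δ p p) :=
    hR.rel_iff.2 fun z => by rw [hσσ, hδδ]; exact ⟨R.refl' _, R.refl' _⟩
  rw [hσ p] at hw
  exact hR.rel_apply_of_rel_apply hG hc (one_mem _) hw p

theorem exists_rel_delta_apply_self [Finite X] (hR : IsIrretractableCongruence σ δ R)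
    (hG : qcsGroup.IsAbelianTransitive σ δ)
    (hc : c ∈ qcsGroup σ δ) (hσ : ∀ x, σ x = c * δ x) (x₀ : X) :
    ∃ y₀, R (δ y₀ x₀) x₀ := by
  let F : Quotient R → Quotient R :=
    Quotient.map (fun y => δ y x₀) fun _ _ h => (hR.rel_iff.1 h x₀).2
  have hF : F.Injective := by
    rintro ⟨y⟩ ⟨y'⟩ h
    exact Quotient.sound (hR.rel_of_rel_delta_apply hG hc hσ (Quotient.exact h))
  obtain ⟨⟨y₀⟩, hy₀⟩ := Finite.injective_iff_surjective.1 hF ⟦x₀⟧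
  exact ⟨y₀, Quotient.exact hy₀⟩

end

theorem rel [Finite X] (hq : IsQCycleSet σ δ) (hR : IsIrretractableCongruence σ δ R)
    (hG : qcsGroup.IsAbelianTransitive σ δ) (x y : X) : R x y := by
  have : Nonempty X := ⟨x⟩
  obtain ⟨c, hc, hσ⟩ := hq.exists_sigma_eq_mul_delta hG
  obtain ⟨y₀, hy₀⟩ := hR.exists_rel_delta_apply_self hG hc hσ x
  have hδy₀ : ∀ p, R (δ y₀ p) p :=
    hR.rel_apply_of_rel_apply hG (qcsGroup.delta_mem y₀) (one_mem _) hy₀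
  have hσy₀ : ∀ p, R (σ y₀ p) p := fun p =>
    R.trans' (by rw [hσ]; exact hR.map_rel c hc (hδy₀ p)) (hR.rel_apply_self hq hG hc hσ p)
  have hy₀_fixed : ∀ x, R (δ x y₀) y₀ := fun x => hR.rel_of_forall_delta hc hσ fun w => by
    obtain ⟨z, rfl⟩ := (δ x).surjective w
    rw [hq.q2]
    exact R.trans' (hR.map_rel _ (qcsGroup.delta_mem _) (hδy₀ z))
      (R.trans' (hR.rel_iff.1 (hσy₀ x) z).2 (R.symm' (hδy₀ _)))
  exact hR.rel_of_rel_delta_apply hG hc hσ (R.trans' (hy₀_fixed x) (R.symm' (hy₀_fixed y)))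

end IsIrretractableCongruence

end

theorem qcs_abelian_multipermutational_general {X : Type*} [Fintype X]
    (σ δ : X → Equiv.Perm X)
    (q1 : ∀ x y z : X, σ (σ x y) (σ x z) = σ (δ y x) (σ y z))
    (q2 : ∀ x y z : X, δ (δ x y) (δ x z) = δ (σ y x) (δ y z))
    (q3 : ∀ x y z : X, δ (σ x y) (σ x z) = σ (δ y x) (δ y z))
    (htrans : ∀ x y : X,
      ∃ g ∈ Subgroup.closure {g : Equiv.Perm X | ∃ x, g = σ x ∨ g = δ x}, g x = y)
    (habel : ∀ g ∈ Subgroup.closure {g : Equiv.Perm X | ∃ x, g = σ x ∨ g = δ x},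
      ∀ h ∈ Subgroup.closure {g : Equiv.Perm X | ∃ x, g = σ x ∨ g = δ x},
      g * h = h * g) :
    ∃ n : ℕ, ∀ x y : X, qcsRel σ δ n x y := by
  have hq : IsQCycleSet σ δ := ⟨q1, q2, q3⟩
  obtain ⟨k, hk⟩ := qcsRel.exists_succ_eq σ δ
  exact ⟨k, (qcsRel.isIrretractableCongruence hq hk).rel hq ⟨htrans, habel⟩⟩

/-- A finite indecomposable q-cycle set with |X| > 1 whose permutation group
is abelian and acts regularly is multipermutational: |Ret^n(X)| = 1 for some n. -/
theorem qcs_abelian_multipermutational {X : Type*} [Fintype X]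
    (hX : 1 < Fintype.card X)
    (σ δ : X → Equiv.Perm X)
    (q1 : ∀ x y z : X, σ (σ x y) (σ x z) = σ (δ y x) (σ y z))
    (q2 : ∀ x y z : X, δ (δ x y) (δ x z) = δ (σ y x) (δ y z))
    (q3 : ∀ x y z : X, δ (σ x y) (σ x z) = σ (δ y x) (δ y z))
    (htrans : ∀ x y : X,
      ∃ g ∈ Subgroup.closure {g : Equiv.Perm X | ∃ x, g = σ x ∨ g = δ x}, g x = y)
    (hreg : ∀ g ∈ Subgroup.closure {g : Equiv.Perm X | ∃ x, g = σ x ∨ g = δ x},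
      ∀ x : X, g x = x → g = 1)
    (habel : ∀ g ∈ Subgroup.closure {g : Equiv.Perm X | ∃ x, g = σ x ∨ g = δ x},
      ∀ h ∈ Subgroup.closure {g : Equiv.Perm X | ∃ x, g = σ x ∨ g = δ x},
      g * h = h * g) :
    ∃ n : ℕ, ∀ x y : X, qcsRel σ δ n x y :=
  qcs_abelian_multipermutational_general σ δ q1 q2 q3 htrans habel
end
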